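/- Let A be a C*-algebra (over ℂ) and a, b ∈ A. Then the norm of the 2×2 matrix !![a, −b; b, a] over A equals max(‖a + Complex.I • b‖, ‖a − Complex.I • b‖). -/

import Mathlib

/-!
With `U = 2^{-1/2} [[1, i], [1, -i]]`, the scalar unitary `U` conjugates `!![a, -b; b, a]` to
`diag(a + i b, a - i b)`. Scalar unitaries preserve the `A`-valued inner product
`⟪v, v⟫ = ∑ star (v i) * v i`, so the norm is unchanged. For a diagonal matrix the C⋆-inequality
`star (d t) (d t) ≤ ‖d‖² star t t` bounds the norm by the largest entry norm, which is attained at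
`t = star d / ‖d‖` placed in a single coordinate.
-/

/-- The canonical C*-matrix norm on matrices over a C*-algebra `A`, obtained by viewing an
`m × n` matrix as an operator between the Hilbert C*-modules `A^n` and `A^m` (as in
Mathlib's `CStarMatrix`).  For square matrices this is the unique C*-algebra norm. -/
noncomputable def cstarMatrixNorm {A : Type*} [NonUnitalNormedRing A] [StarRing A]
    {m n : ℕ} (M : Matrix (Fin m) (Fin n) A) : ℝ :=
  sSup {r : ℝ | ∃ v : Fin n → A, ‖∑ i, star (v i) * v i‖ ≤ 1 ∧
    r = Real.sqrt ‖∑ j, star (M.mulVec v j) * M.mulVec v j‖}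

open Matrix

section ScalarAction

variable {ι 𝕜 A : Type*} [Fintype ι]

def innerSelf [NonUnitalNonAssocSemiring A] [Star A] (v : ι → A) : A :=
  ∑ i, star (v i) * v i

theorem innerSelf_single [DecidableEq ι] [NonUnitalNonAssocSemiring A] [StarAddMonoid A] (i : ι)
    (t : A) : innerSelf (Pi.single i t) = star t * t := by
  simp [innerSelf, Pi.single_apply, apply_ite]

variable [CommSemiring 𝕜]

def scalarMulVec [AddCommMonoid A] [Module 𝕜 A] (U : Matrix ι ι 𝕜) (v : ι → A) : ι → A :=
  fun i ↦ ∑ j, U i j • v j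

theorem scalarMulVec_mul [AddCommMonoid A] [Module 𝕜 A] (U V : Matrix ι ι 𝕜) (v : ι → A) :
    scalarMulVec (U * V) v = scalarMulVec U (scalarMulVec V v) := by
  ext i
  simp only [scalarMulVec, mul_apply, Finset.sum_smul, Finset.smul_sum, smul_smul]
  exact Finset.sum_comm

theorem scalarMulVec_one [DecidableEq ι] [AddCommMonoid A] [Module 𝕜 A] (v : ι → A) :
    scalarMulVec (1 : Matrix ι ι 𝕜) v = v := by
  ext i
  simp [scalarMulVec, one_apply, ite_smul]

theorem innerSelf_scalarMulVec [DecidableEq ι] [StarRing 𝕜] [NonUnitalSemiring A] [StarRing A]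
    [Module 𝕜 A] [StarModule 𝕜 A] [IsScalarTower 𝕜 A A] [SMulCommClass 𝕜 A A]
    {U : Matrix ι ι 𝕜} (hU : U ∈ unitary (Matrix ι ι 𝕜)) (v : ι → A) :
    innerSelf (scalarMulVec U v) = innerSelf v := by
  have hU' : ∀ j k, ∑ i, star (U i j) * U i k = if j = k then 1 else 0 := fun j k ↦ by
    simpa [mul_apply, one_apply] using
      congrArg (fun M : Matrix ι ι 𝕜 ↦ M j k) (Unitary.star_mul_self_of_mem hU)
  calc innerSelf (scalarMulVec U v)
      = ∑ j, ∑ k, (∑ i, star (U i j) * U i k) • (star (v j) * v k) := by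
        simp only [innerSelf, scalarMulVec, star_sum, star_smul, Finset.sum_mul, Finset.mul_sum,
          smul_mul_smul_comm, Finset.sum_smul]
        exact Finset.sum_comm.trans (Finset.sum_congr rfl fun _ _ ↦ Finset.sum_comm) |>.trans
          Finset.sum_comm
    _ = innerSelf v := by simp [hU', ite_smul, innerSelf]

end ScalarAction

section Intertwine

variable {A : Type*} [NonUnitalNormedRing A] [StarRing A] {m n : ℕ}

theorem cstarMatrixNorm_eq_sSup (M : Matrix (Fin m) (Fin n) A) :
    cstarMatrixNorm M =
      sSup {r : ℝ | ∃ v : Fin n → A, ‖innerSelf v‖ ≤ 1 ∧ r = √‖innerSelf (M *ᵥ v)‖} :=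
  rfl

theorem cstarMatrixNorm_eq_of_intertwine {M N : Matrix (Fin m) (Fin n) A}
    {S : (Fin m → A) → Fin m → A} {T : (Fin n → A) → Fin n → A} (hT : T.Surjective)
    (hS_inner : ∀ w, innerSelf (S w) = innerSelf w) (hT_inner : ∀ v, innerSelf (T v) = innerSelf v)
    (hNM : ∀ v, N *ᵥ T v = S (M *ᵥ v)) :
    cstarMatrixNorm N = cstarMatrixNorm M := by
  simp only [cstarMatrixNorm_eq_sSup]
  congr 1
  ext r
  constructor
  · rintro ⟨w, hw, rfl⟩
    obtain ⟨v, rfl⟩ := hT w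
    exact ⟨v, hT_inner v ▸ hw, by rw [hNM, hS_inner]⟩
  · rintro ⟨v, hv, rfl⟩
    exact ⟨T v, (hT_inner v).symm ▸ hv, by rw [hNM, hS_inner]⟩

theorem cstarMatrixNorm_eq_of_unitary_intertwine {𝕜 : Type*} [CommRing 𝕜] [StarRing 𝕜]
    [Module 𝕜 A] [StarModule 𝕜 A] [IsScalarTower 𝕜 A A] [SMulCommClass 𝕜 A A]
    {M N : Matrix (Fin n) (Fin n) A} {U : Matrix (Fin n) (Fin n) 𝕜}
    (hU : U ∈ unitary (Matrix (Fin n) (Fin n) 𝕜))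
    (hNM : ∀ v, N *ᵥ scalarMulVec U v = scalarMulVec U (M *ᵥ v)) :
    cstarMatrixNorm N = cstarMatrixNorm M :=
  cstarMatrixNorm_eq_of_intertwine
    (fun w ↦ ⟨scalarMulVec (star U) w, by
      rw [← scalarMulVec_mul, Unitary.mul_star_self_of_mem hU, scalarMulVec_one]⟩)
    (innerSelf_scalarMulVec hU) (innerSelf_scalarMulVec hU) hNM

end Intertwine

section Diagonal

variable {A : Type*} [NonUnitalCStarAlgebra A]

theorem norm_innerSelf_mul_le [PartialOrder A] [StarOrderedRing A] {ι : Type*} [Fintype ι]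
    {d : ι → A} {K : ℝ} (hd : ∀ i, ‖d i‖ ≤ K) (v : ι → A) :
    ‖innerSelf (fun i ↦ d i * v i)‖ ≤ K ^ 2 * ‖innerSelf v‖ := by
  have hle : innerSelf (fun i ↦ d i * v i) ≤ (K ^ 2) • innerSelf v := by
    simp only [innerSelf, Finset.smul_sum]
    gcongr with i
    calc star (d i * v i) * (d i * v i) = star (v i) * (star (d i) * d i) * v i := by
          simp only [star_mul, mul_assoc]
      _ ≤ ‖star (d i) * d i‖ • (star (v i) * v i) := CStarAlgebra.star_left_conjugate_le_norm_smul
      _ ≤ K ^ 2 • (star (v i) * v i) := by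
          rw [CStarRing.norm_star_mul_self, ← sq]
          gcongr
          · exact star_mul_self_nonneg _
          · exact hd i
  calc ‖innerSelf (fun i ↦ d i * v i)‖ ≤ ‖(K ^ 2) • innerSelf v‖ :=
        CStarAlgebra.norm_le_norm_of_nonneg_of_le
          (Finset.sum_nonneg fun i _ ↦ star_mul_self_nonneg _) hle
    _ = K ^ 2 * ‖innerSelf v‖ := by rw [norm_smul, Real.norm_of_nonneg (sq_nonneg K)]

theorem exists_norm_star_mul_self_le_one_and_sqrt_eq_norm (x : A) :
    ∃ t : A, ‖star t * t‖ ≤ 1 ∧ √‖star (x * t) * (x * t)‖ = ‖x‖ := by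
  refine ⟨‖x‖⁻¹ • star x, ?_, ?_⟩
  · rw [CStarRing.norm_star_mul_self, norm_smul, norm_star, Real.norm_of_nonneg (by positivity)]
    by_cases hx : x = 0
    · simp [hx]
    · rw [inv_mul_cancel₀ (norm_ne_zero_iff.mpr hx), one_mul]
  · rw [CStarRing.norm_star_mul_self, Real.sqrt_mul_self (norm_nonneg _), mul_smul_comm,
      norm_smul, Real.norm_of_nonneg (by positivity), CStarRing.norm_self_mul_star]
    by_cases hx : x = 0
    · simp [hx]
    · field_simp

theorem cstarMatrixNorm_diagonal {n : ℕ} (d : Fin n → A) :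
    cstarMatrixNorm (diagonal d) = ⨆ i, ‖d i‖ := by
  let _ := CStarAlgebra.spectralOrder A
  have := CStarAlgebra.spectralOrderedRing A
  rw [cstarMatrixNorm_eq_sSup]
  set S := {r : ℝ | ∃ v : Fin n → A, ‖innerSelf v‖ ≤ 1 ∧ r = √‖innerSelf (diagonal d *ᵥ v)‖}
  set K := ⨆ i, ‖d i‖
  have hK : 0 ≤ K := Real.iSup_nonneg fun i ↦ norm_nonneg _
  have hub : ∀ r ∈ S, r ≤ K := by
    rintro _ ⟨v, hv, rfl⟩
    have hdK : ∀ i, ‖d i‖ ≤ K := le_ciSup (Finite.bddAbove_range _)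
    calc √‖innerSelf (diagonal d *ᵥ v)‖ ≤ √(K ^ 2) := by
          refine Real.sqrt_le_sqrt ?_
          rw [show diagonal d *ᵥ v = fun i ↦ d i * v i from funext (mulVec_diagonal d v)]
          nlinarith [norm_innerSelf_mul_le hdK v, norm_nonneg (innerSelf v)]
      _ = K := Real.sqrt_sq hK
  have hmem : ∀ i, ‖d i‖ ∈ S := fun i ↦ by
    obtain ⟨t, ht, hdt⟩ := exists_norm_star_mul_self_le_one_and_sqrt_eq_norm (d i)
    exact ⟨Pi.single i t, by rwa [innerSelf_single],
      by rw [diagonal_mulVec_single, innerSelf_single, hdt]⟩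
  refine le_antisymm (Real.sSup_le hub hK) (Real.iSup_le (fun i ↦ le_csSup ⟨K, hub⟩ (hmem i)) ?_)
  exact Real.sSup_nonneg fun _ ⟨_, _, hr⟩ ↦ hr ▸ Real.sqrt_nonneg _

end Diagonal

theorem ciSup_fin_two {α : Type*} [ConditionallyCompleteLinearOrder α] (f : Fin 2 → α) :
    ⨆ i, f i = max (f 0) (f 1) :=
  le_antisymm (ciSup_le (Fin.forall_fin_two.2 ⟨le_max_left _ _, le_max_right _ _⟩))
    (max_le (le_ciSup (Finite.bddAbove_range f) 0) (le_ciSup (Finite.bddAbove_range f) 1))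

section Skew

open Complex

noncomputable def skewUnitary : Matrix (Fin 2) (Fin 2) ℂ := ((√2 : ℝ) : ℂ)⁻¹ • !![1, I; 1, -I]

theorem skewUnitary_mem_unitary : skewUnitary ∈ unitary (Matrix (Fin 2) (Fin 2) ℂ) := by
  have h2 : ((√2 : ℝ) : ℂ)⁻¹ * ((√2 : ℝ) : ℂ)⁻¹ = 2⁻¹ := by
    rw [← mul_inv, ← ofReal_mul, Real.mul_self_sqrt zero_le_two, ofReal_ofNat]
  constructor <;> ext i j <;> fin_cases i <;> fin_cases j <;>
    norm_num [skewUnitary, mul_apply, Fin.sum_univ_two, mul_mul_mul_comm _ I, h2]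

theorem diagonal_mulVec_scalarMulVec_skewUnitary {A : Type*} [NonUnitalRing A] [Module ℂ A]
    [IsScalarTower ℂ A A] [SMulCommClass ℂ A A] (a b : A) (v : Fin 2 → A) :
    diagonal ![a + I • b, a - I • b] *ᵥ scalarMulVec skewUnitary v
      = scalarMulVec skewUnitary (!![a, -b; b, a] *ᵥ v) := by
  ext i
  rw [mulVec_diagonal]
  fin_cases i
  · simp only [Fin.zero_eta, Fin.isValue, cons_val_zero, cons_val_one, cons_val', cons_val_fin_one,
      scalarMulVec, skewUnitary, Matrix.smul_apply, of_apply, smul_eq_mul, Fin.sum_univ_two,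
      mul_one, mul_add, mul_smul_comm, add_mul, smul_mul_assoc, smul_add, smul_smul, mul_assoc,
      I_mul_I, mul_neg, neg_smul, mulVec, dotProduct, neg_mul, smul_neg]
    abel
  · simp only [Fin.mk_one, Fin.isValue, cons_val_zero, cons_val_one, cons_val', cons_val_fin_one,
      scalarMulVec, skewUnitary, Matrix.smul_apply, of_apply, smul_eq_mul, Fin.sum_univ_two,
      mul_one, mul_neg, neg_smul, mul_add, mul_smul_comm, sub_mul, smul_mul_assoc, smul_sub,
      smul_smul, mul_assoc, I_mul_I, sub_neg_eq_add, neg_add_rev, mulVec, dotProduct, smul_add,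
      neg_mul, smul_neg]
    abel

end Skew

theorem norm_two_by_two_skew {A : Type*} [NonUnitalCStarAlgebra A] (a b : A) :
    cstarMatrixNorm !![a, -b; b, a]
      = max ‖a + Complex.I • b‖ ‖a - Complex.I • b‖ := by
  rw [← cstarMatrixNorm_eq_of_unitary_intertwine skewUnitary_mem_unitary
    (diagonal_mulVec_scalarMulVec_skewUnitary a b), cstarMatrixNorm_diagonal, ciSup_fin_two]
  rfl
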